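/- arXiv:2501.15569 — 2 statements merged into one kernel-verified Lean document; each statement's English description precedes it below -/
import Mathlib

section
/- Let A be a graded ring such that A_+ is finitely generated as a right ideal, let M be a right A-module and m ∈ M. Then the following are equivalent: (i) there exists n ≥ 1 such that m·x = 0 for every x ∈ (A_+)^n; (ii) there exists k ∈ ℕ such that m·x = 0 for every x ∈ A_{≥k}. (Proposition 3.4 / Corollary 3.5: the torsion class Tors A consists exactly of the modules all of whose elements are annihilated by some A_{≥k}.) -/
/-!
Proposition 3.4 / Corollary 3.5: let `A` be a graded ring with `A_+` finitely
generated as a right ideal, `M` a right `A`-module and `m ∈ M`.  Then `m` is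
annihilated by some power `(A_+)^n` (`n ≥ 1`) iff it is annihilated by some
tail `A_{≥ k}`.
-/

/-- The product `I·J` of two subsets of `A`: the additive span of the products
`x * y` with `x ∈ I`, `y ∈ J`. -/
def setIdealMul {A : Type*} [Ring A] (I J : Set A) : Set A :=
  (AddSubgroup.closure {z : A | ∃ x ∈ I, ∃ y ∈ J, z = x * y} : AddSubgroup A)

/-- The `n`-th power of an ideal (as a set); the `0`-th power is `A` itself. -/
def setIdealPow {A : Type*} [Ring A] (I : Set A) : ℕ → Set A
  | 0 => Set.univ
  | n + 1 => setIdealMul I (setIdealPow I n)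

/-- The tail `A_{≥ n}`: elements all of whose homogeneous components have
degree `≥ n`.  `A_+ = A_{≥ 1}`. -/
def geIdeal {A : Type*} [Ring A] (𝒜 : ℕ → AddSubgroup A) [GradedRing 𝒜]
    (n : ℕ) : Set A :=
  {x : A | ∀ m : ℕ, m < n → ((DirectSum.decompose 𝒜 x m : 𝒜 m) : A) = 0}

/-- The right ideal of `A` generated by a set `s`. -/
def rightIdealSpan {A : Type*} [Ring A] (s : Set A) : Set A :=
  (AddSubgroup.closure {y : A | ∃ a ∈ s, ∃ r : A, y = a * r} : AddSubgroup A)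

/-- `I` is finitely generated as a right ideal. -/
def IsFGRightIdealSet {A : Type*} [Ring A] (I : Set A) : Prop :=
  ∃ s : Finset A, I = rightIdealSpan (s : Set A)

section Aux
variable {A : Type*} [Ring A] (𝒜 : ℕ → AddSubgroup A) [GradedRing 𝒜]

/-- `geIdeal` as an additive subgroup. -/
def geSub (n : ℕ) : AddSubgroup A where
  carrier := geIdeal 𝒜 n
  zero_mem' := by
    intro i hi
    rw [DirectSum.decompose_zero]
    simp
  add_mem' := by
    intro a b ha hb i hi
    rw [DirectSum.decompose_add, DirectSum.add_apply, AddSubgroup.coe_add,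
      ha i hi, hb i hi, add_zero]
  neg_mem' := by
    intro a ha i hi
    rw [DirectSum.decompose_neg, DFinsupp.neg_apply, AddSubgroup.coe_neg,
      ha i hi, neg_zero]

lemma mem_geIdeal_of_mem {x : A} {t k : ℕ} (hx : x ∈ 𝒜 t) (hk : k ≤ t) :
    x ∈ geIdeal 𝒜 k := by
  intro i hi
  exact DirectSum.decompose_of_mem_ne 𝒜 hx (by omega)

lemma geIdeal_antitone {k k' : ℕ} (h : k ≤ k') : geIdeal 𝒜 k' ⊆ geIdeal 𝒜 k :=
  fun _ hx i hi => hx i (lt_of_lt_of_le hi h)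

lemma mul_mem_geIdeal {x y : A} {a b : ℕ} (hx : x ∈ geIdeal 𝒜 a) (hy : y ∈ geIdeal 𝒜 b) :
    x * y ∈ geIdeal 𝒜 (a + b) := by
  classical
  have hxe := DirectSum.sum_support_decompose 𝒜 x
  have hye := DirectSum.sum_support_decompose 𝒜 y
  have : x * y = ∑ i ∈ (DirectSum.decompose 𝒜 x).support,
      ∑ j ∈ (DirectSum.decompose 𝒜 y).support,
      ((DirectSum.decompose 𝒜 x i : A) * (DirectSum.decompose 𝒜 y j : A)) := by
    rw [← Finset.sum_mul_sum, hxe, hye]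
  show x * y ∈ geSub 𝒜 (a + b)
  rw [this]
  apply AddSubgroup.sum_mem
  intro i _
  apply AddSubgroup.sum_mem
  intro j _
  by_cases hia : a ≤ i
  · by_cases hjb : b ≤ j
    · exact mem_geIdeal_of_mem 𝒜
        (SetLike.mul_mem_graded (DirectSum.decompose 𝒜 x i).2 (DirectSum.decompose 𝒜 y j).2)
        (by omega)
    · rw [hy j (by omega), mul_zero]; exact zero_mem _
  · rw [hx i (by omega), zero_mul]; exact zero_mem _

lemma mem_setIdealMul {I J : Set A} {x y : A} (hx : x ∈ I) (hy : y ∈ J) :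
    x * y ∈ setIdealMul I J :=
  AddSubgroup.subset_closure ⟨x, hx, y, hy, rfl⟩

lemma setIdealMul_subset {I J : Set A} {S : AddSubgroup A}
    (h : ∀ x ∈ I, ∀ y ∈ J, x * y ∈ S) : setIdealMul I J ⊆ S := by
  intro z hz
  refine AddSubgroup.closure_le S |>.2 ?_ hz
  rintro _ ⟨x, hx, y, hy, rfl⟩
  exact h x hx y hy

lemma setIdealMul_mono_right {I J J' : Set A} (h : J ⊆ J') :
    setIdealMul I J ⊆ setIdealMul I J' := by
  intro z hz
  refine AddSubgroup.closure_le _ |>.2 ?_ hz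
  rintro _ ⟨x, hx, y, hy, rfl⟩
  exact AddSubgroup.subset_closure ⟨x, hx, y, h hy, rfl⟩

lemma pow_subset_geIdeal : ∀ n : ℕ, setIdealPow (geIdeal 𝒜 1) n ⊆ geIdeal 𝒜 n := by
  intro n
  induction n with
  | zero => intro x _ i hi; omega
  | succ n ih =>
    apply setIdealMul_subset (S := geSub 𝒜 (n+1))
    intro x hx y hy
    show x * y ∈ geIdeal 𝒜 (n+1)
    have := mul_mem_geIdeal 𝒜 hx (ih hy)
    rwa [add_comm] at this

/-- Truncation: kill all homogeneous components of degree `< k`. -/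
def truncHom (k : ℕ) : A →+ A where
  toFun x := x - ∑ t ∈ Finset.range k, ((DirectSum.decompose 𝒜 x t : 𝒜 t) : A)
  map_zero' := by simp [DirectSum.decompose_zero]
  map_add' := by
    intro x y
    simp only [DirectSum.decompose_add, DirectSum.add_apply, AddSubgroup.coe_add,
      Finset.sum_add_distrib]
    abel

lemma truncHom_of_geIdeal {k : ℕ} {x : A} (hx : x ∈ geIdeal 𝒜 k) :
    truncHom 𝒜 k x = x := by
  show x - _ = x
  rw [Finset.sum_eq_zero fun t ht => hx t (Finset.mem_range.1 ht), sub_zero]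

lemma truncHom_of_mem_lt {z : A} {t k : ℕ} (hz : z ∈ 𝒜 t) (h : t < k) :
    truncHom 𝒜 k z = 0 := by
  show z - _ = 0
  rw [Finset.sum_eq_single_of_mem t (Finset.mem_range.2 h)
    (fun b _ hb => DirectSum.decompose_of_mem_ne 𝒜 hz (Ne.symm hb)),
    DirectSum.decompose_of_mem_same 𝒜 hz, sub_self]

lemma truncHom_of_mem_ge {z : A} {t k : ℕ} (hz : z ∈ 𝒜 t) (h : k ≤ t) :
    truncHom 𝒜 k z = z :=
  truncHom_of_geIdeal 𝒜 (mem_geIdeal_of_mem 𝒜 hz h)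

lemma tail_subset_mul (s : Finset A) (hs : geIdeal 𝒜 1 = rightIdealSpan (s : Set A))
    (d : ℕ) (hd : ∀ a ∈ s, ∀ i, d ≤ i → ((DirectSum.decompose 𝒜 a i : 𝒜 i) : A) = 0)
    {k : ℕ} (hk : d + 1 ≤ k) :
    geIdeal 𝒜 k ⊆ setIdealMul (geIdeal 𝒜 1) (geIdeal 𝒜 (k - d)) := by
  classical
  set S : AddSubgroup A := AddSubgroup.closure
    {z : A | ∃ x ∈ geIdeal 𝒜 1, ∃ y ∈ geIdeal 𝒜 (k - d), z = x * y} with hS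
  intro x hx
  have hx1 : x ∈ geIdeal 𝒜 1 := geIdeal_antitone 𝒜 (by omega) hx
  rw [hs] at hx1
  have key : ∀ y ∈ {y : A | ∃ a ∈ (s : Set A), ∃ r : A, y = a * r},
      y ∈ S.comap (truncHom 𝒜 k) := by
    rintro _ ⟨a, ha, r, rfl⟩
    have ha1 : a ∈ geIdeal 𝒜 1 := by
      rw [hs]
      exact AddSubgroup.subset_closure ⟨a, ha, 1, (mul_one a).symm⟩
    have hae := DirectSum.sum_support_decompose 𝒜 a
    have hre := DirectSum.sum_support_decompose 𝒜 r
    have har : a * r = ∑ i ∈ (DirectSum.decompose 𝒜 a).support,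
        ∑ j ∈ (DirectSum.decompose 𝒜 r).support,
        ((DirectSum.decompose 𝒜 a i : A) * (DirectSum.decompose 𝒜 r j : A)) := by
      rw [← Finset.sum_mul_sum, hae, hre]
    show truncHom 𝒜 k (a * r) ∈ S
    rw [har, map_sum]
    apply AddSubgroup.sum_mem
    intro i _
    rw [map_sum]
    apply AddSubgroup.sum_mem
    intro j _
    set z := (DirectSum.decompose 𝒜 a i : A) * (DirectSum.decompose 𝒜 r j : A) with hz
    have hzm : z ∈ 𝒜 (i + j) :=
      SetLike.mul_mem_graded (DirectSum.decompose 𝒜 a i).2 (DirectSum.decompose 𝒜 r j).2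
    by_cases hik : i + j < k
    · rw [truncHom_of_mem_lt 𝒜 hzm hik]; exact zero_mem _
    · rw [truncHom_of_mem_ge 𝒜 hzm (by omega)]
      by_cases hi0 : 1 ≤ i
      · by_cases hid : i < d
        · refine AddSubgroup.subset_closure ⟨_, mem_geIdeal_of_mem 𝒜
            (DirectSum.decompose 𝒜 a i).2 hi0, _, mem_geIdeal_of_mem 𝒜
            (DirectSum.decompose 𝒜 r j).2 (by omega), rfl⟩
        · have : ((DirectSum.decompose 𝒜 a i : 𝒜 i) : A) = 0 := hd a ha i (by omega)
          rw [hz, this, zero_mul]; exact zero_mem _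
      · have : ((DirectSum.decompose 𝒜 a i : 𝒜 i) : A) = 0 := ha1 i (by omega)
        rw [hz, this, zero_mul]; exact zero_mem _
  have hmem : x ∈ S.comap (truncHom 𝒜 k) :=
    (AddSubgroup.closure_le _).2 key hx1
  have : truncHom 𝒜 k x ∈ S := hmem
  rwa [truncHom_of_geIdeal 𝒜 hx] at this

lemma tail_subset_pow (s : Finset A) (hs : geIdeal 𝒜 1 = rightIdealSpan (s : Set A))
    (d : ℕ) (hd : ∀ a ∈ s, ∀ i, d ≤ i → ((DirectSum.decompose 𝒜 a i : 𝒜 i) : A) = 0) :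
    ∀ n : ℕ, geIdeal 𝒜 (n * d + 1) ⊆ setIdealPow (geIdeal 𝒜 1) (n + 1) := by
  intro n
  induction n with
  | zero =>
    intro x hx
    simp only [Nat.zero_mul, Nat.zero_add] at hx
    show x ∈ setIdealMul (geIdeal 𝒜 1) (setIdealPow (geIdeal 𝒜 1) 0)
    have := mem_setIdealMul (A := A) hx (Set.mem_univ (1 : A))
    rwa [mul_one] at this
  | succ n ih =>
    have h1 : (n + 1) * d + 1 = (n * d + 1) + d := by ring
    have hk : d + 1 ≤ (n + 1) * d + 1 := by
      rw [h1]; have := Nat.zero_le (n * d); omega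
    intro x hx
    have hsub := tail_subset_mul 𝒜 s hs d hd hk hx
    have h2 : (n + 1) * d + 1 - d = n * d + 1 := by rw [h1]; omega
    rw [h2] at hsub
    exact setIdealMul_mono_right ih hsub

end Aux

/-- Proposition 3.4 / Corollary 3.5. -/
theorem annihilated_by_pow_iff_annihilated_by_tail {A : Type*} [Ring A]
    (𝒜 : ℕ → AddSubgroup A) [GradedRing 𝒜]
    (hfg : IsFGRightIdealSet (geIdeal 𝒜 1))
    (M : Type*) [AddCommGroup M] [Module Aᵐᵒᵖ M] (m : M) :
    (∃ n : ℕ, 1 ≤ n ∧ ∀ x ∈ setIdealPow (geIdeal 𝒜 1) n, MulOpposite.op x • m = 0) ↔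
      (∃ k : ℕ, ∀ x ∈ geIdeal 𝒜 k, MulOpposite.op x • m = 0) := by
  classical
  obtain ⟨s, hs⟩ := hfg
  set d : ℕ := 1 + s.sup (fun a => (DirectSum.decompose 𝒜 a).support.sup id) with hdd
  have hd : ∀ a ∈ s, ∀ i, d ≤ i → ((DirectSum.decompose 𝒜 a i : 𝒜 i) : A) = 0 := by
    intro a ha i hi
    by_contra hne
    have hisupp : i ∈ (DirectSum.decompose 𝒜 a).support := by
      rw [DFinsupp.mem_support_iff]
      intro h0
      apply hne
      rw [h0]; rfl
    have h1 : i ≤ (DirectSum.decompose 𝒜 a).support.sup id := Finset.le_sup (f := id) hisupp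
    have h2 : (DirectSum.decompose 𝒜 a).support.sup id ≤
        s.sup (fun a => (DirectSum.decompose 𝒜 a).support.sup id) :=
      Finset.le_sup (f := fun a => (DirectSum.decompose 𝒜 a).support.sup id) ha
    omega
  constructor
  · rintro ⟨n, hn, hann⟩
    refine ⟨(n - 1) * d + 1, fun x hx => hann x ?_⟩
    have := tail_subset_pow 𝒜 s hs d hd (n - 1) hx
    rwa [Nat.sub_add_cancel hn] at this
  · rintro ⟨k, hann⟩
    refine ⟨k + 1, by omega, fun x hx => hann x ?_⟩
    exact geIdeal_antitone 𝒜 (Nat.le_succ k) (pow_subset_geIdeal 𝒜 (k + 1) hx)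
end

section
/- Let A be a graded ring such that A_+ is finitely generated as a right ideal. Let M be a right A-module and K ⊆ M a submodule such that every element of K is annihilated by A_{≥n} for some n, and every element of the quotient module M/K is annihilated by A_{≥n} for some n. Then every element of M is annihilated by A_{≥n} for some n. (The extension-closedness established in the proof of Proposition 3.4: the class of modules all of whose elements are annihilated by some A_{≥n} is closed under extensions.) -/
/-!
The finitely many homogeneous components `g_i` of generators of `A_+` again generate `A_+`,
and have degrees `1 ≤ d_i ≤ D`. Comparing homogeneous components gives
`A_{≥ n + D + 1} ⊆ ∑ g_i A_{≥ n}`.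

Induct on `c` such that `m + K` is killed by `A_{≥ c}`. For `c = 0`, `m ∈ K`. Otherwise, since
`g_i A_{≥ c - 1} ⊆ A_{≥ c}`, each `m g_i + K` is killed by `A_{≥ c - 1}`, so by induction `m g_i`
is killed by some `A_{≥ n_i}`; hence `m` is killed by `A_{≥ max n_i + D + 1}`.
-/

universe u

section GeIdeal

variable {A : Type*} [Ring A] (𝒜 : ℕ → AddSubgroup A) [GradedRing 𝒜]

theorem geIdeal_antitone_s5 : Antitone (geIdeal 𝒜) :=
  fun _ _ hmn _ hx k hk => hx k (lt_of_lt_of_le hk hmn)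

theorem one_mem_geIdeal_zero : (1 : A) ∈ geIdeal 𝒜 0 :=
  fun _ hk => absurd hk (Nat.not_lt_zero _)

variable {𝒜} in
theorem mem_geIdeal_of_mem_s5 {n e : ℕ} (hne : n ≤ e) {x : A} (hx : x ∈ 𝒜 e) :
    x ∈ geIdeal 𝒜 n :=
  fun _ hk => DirectSum.decompose_of_mem_ne 𝒜 hx (by omega)

theorem mul_mem_geIdeal_s5 {p q : ℕ} {a b : A} (ha : a ∈ geIdeal 𝒜 p) (hb : b ∈ geIdeal 𝒜 q) :
    a * b ∈ geIdeal 𝒜 (p + q) := by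
  classical
  intro m hm
  rw [← GradedRing.proj_apply, ← DirectSum.sum_support_decompose 𝒜 a, Finset.sum_mul, map_sum]
  refine Finset.sum_eq_zero fun i _ => ?_
  rw [GradedRing.proj_apply, DirectSum.coe_decompose_mul_of_left_mem 𝒜 m (SetLike.coe_mem _)]
  split_ifs with him
  · by_cases hip : i < p
    · rw [ha i hip, zero_mul]
    · rw [hb (m - i) (by omega), mul_zero]
  · rfl

end GeIdeal

section RightIdealSpan

variable {A : Type*} [Ring A]

theorem subset_rightIdealSpan (s : Set A) : s ⊆ rightIdealSpan s :=
  fun a ha => AddSubgroup.subset_closure ⟨a, ha, 1, (mul_one a).symm⟩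

theorem rightIdealSpan_subset_span {s t : Set A} (hst : s ⊆ Submodule.span Aᵐᵒᵖ t) :
    rightIdealSpan s ⊆ Submodule.span Aᵐᵒᵖ t := by
  refine (AddSubgroup.closure_le (Submodule.span Aᵐᵒᵖ t).toAddSubgroup).2 ?_
  rintro _ ⟨a, ha, r, rfl⟩
  exact (Submodule.span Aᵐᵒᵖ t).smul_mem (MulOpposite.op r) (hst ha)

end RightIdealSpan

theorem IsFGRightIdealSet.exists_homogeneous_generators {A : Type u} [Ring A]
    {𝒜 : ℕ → AddSubgroup A} [GradedRing 𝒜] (hfg : IsFGRightIdealSet (geIdeal 𝒜 1)) :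
    ∃ (ι : Type u) (_ : Fintype ι) (g : ι → A) (d : ι → ℕ), (∀ i, g i ∈ 𝒜 (d i)) ∧
      (∀ i, g i ∈ geIdeal 𝒜 1) ∧ geIdeal 𝒜 1 ⊆ Submodule.span Aᵐᵒᵖ (Set.range g) := by
  classical
  obtain ⟨s, hs⟩ := hfg
  have hs_pos : ∀ a ∈ s, a ∈ geIdeal 𝒜 1 := fun a ha => hs ▸ subset_rightIdealSpan _ ha
  refine ⟨Σ a : s, (DirectSum.decompose 𝒜 (a : A)).support, inferInstance,
    fun i => DirectSum.decompose 𝒜 (i.1 : A) i.2, fun i => i.2, fun i => SetLike.coe_mem _,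
    fun ⟨⟨a, ha⟩, ⟨j, hj⟩⟩ => mem_geIdeal_of_mem_s5 ?_ (SetLike.coe_mem _), ?_⟩
  · refine Nat.one_le_iff_ne_zero.2 fun hj0 => ?_
    subst hj0
    exact (DFinsupp.mem_support_iff.1 hj) (Subtype.ext (hs_pos a ha 0 Nat.one_pos))
  · rw [hs]
    refine rightIdealSpan_subset_span fun a ha => ?_
    rw [← DirectSum.sum_support_decompose 𝒜 a, ← Finset.sum_coe_sort]
    exact Submodule.sum_mem _ fun j _ => Submodule.subset_span ⟨⟨⟨a, ha⟩, j⟩, rfl⟩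

open scoped Pointwise

section Tail

variable {A : Type*} [Ring A] {𝒜 : ℕ → AddSubgroup A} [GradedRing 𝒜]
  {ι : Type*} [Fintype ι] {g : ι → A} {d : ι → ℕ}

theorem mem_closure_range_mul_geIdeal_of_mem (hg : ∀ i, g i ∈ 𝒜 (d i))
    (hspan : geIdeal 𝒜 1 ⊆ Submodule.span Aᵐᵒᵖ (Set.range g))
    {n e : ℕ} (he : 1 ≤ e) (hde : ∀ i, n + d i ≤ e) {x : A} (hx : x ∈ 𝒜 e) :
    x ∈ AddSubgroup.closure (Set.range g * geIdeal 𝒜 n) := by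
  obtain ⟨u, hu⟩ :=
    (Submodule.mem_span_range_iff_exists_fun Aᵐᵒᵖ).1 (hspan (mem_geIdeal_of_mem_s5 he hx))
  have hx_eq : x = ∑ i, g i * DirectSum.decompose 𝒜 (u i).unop (e - d i) := by
    rw [← DirectSum.decompose_of_mem_same 𝒜 hx, ← GradedRing.proj_apply, ← hu, map_sum]
    refine Finset.sum_congr rfl fun i _ => ?_
    rw [GradedRing.proj_apply, show u i • g i = g i * (u i).unop from rfl,
      DirectSum.coe_decompose_mul_of_left_mem_of_le 𝒜 (hg i) (by have := hde i; omega)]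
  rw [hx_eq]
  exact AddSubgroup.sum_mem _ fun i _ => AddSubgroup.subset_closure
    (Set.mul_mem_mul ⟨i, rfl⟩ (mem_geIdeal_of_mem_s5 (by have := hde i; omega) (SetLike.coe_mem _)))

theorem exists_geIdeal_add_subset_closure (hg : ∀ i, g i ∈ 𝒜 (d i))
    (hspan : geIdeal 𝒜 1 ⊆ Submodule.span Aᵐᵒᵖ (Set.range g)) :
    ∃ D, ∀ n, geIdeal 𝒜 (n + D) ⊆ AddSubgroup.closure (Set.range g * geIdeal 𝒜 n) := by
  classical
  refine ⟨Finset.univ.sup d + 1, fun n a ha => ?_⟩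
  rw [← DirectSum.sum_support_decompose 𝒜 a]
  refine AddSubgroup.sum_mem _ fun j _ => ?_
  by_cases hj : j < n + (Finset.univ.sup d + 1)
  · rw [ha j hj]
    exact AddSubgroup.zero_mem _
  · refine mem_closure_range_mul_geIdeal_of_mem hg hspan (by omega) (fun i => ?_)
      (SetLike.coe_mem _)
    have := Finset.le_sup (f := d) (Finset.mem_univ i)
    omega

end Tail

section Module

variable {A : Type*} [Ring A] {M : Type*} [AddCommGroup M] [Module Aᵐᵒᵖ M]

theorem op_smul_eq_zero_of_mem_closure {S : Set A} {m : M}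
    (hS : ∀ a ∈ S, MulOpposite.op a • m = 0) {a : A} (ha : a ∈ AddSubgroup.closure S) :
    MulOpposite.op a • m = 0 := by
  induction ha using AddSubgroup.closure_induction with
  | mem a ha => exact hS a ha
  | zero => simp
  | add a b _ _ ha hb => simp [add_smul, ha, hb]
  | neg a _ ha => simp [ha]

theorem exists_geIdeal_smul_eq_zero_of_mk {𝒜 : ℕ → AddSubgroup A} [GradedRing 𝒜]
    {ι : Type*} [Fintype ι] {g : ι → A} (hg : ∀ i, g i ∈ geIdeal 𝒜 1) {D : ℕ}
    (htail : ∀ n, geIdeal 𝒜 (n + D) ⊆ AddSubgroup.closure (Set.range g * geIdeal 𝒜 n))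
    (K : Submodule Aᵐᵒᵖ M)
    (hK : ∀ x ∈ K, ∃ n : ℕ, ∀ a ∈ geIdeal 𝒜 n, MulOpposite.op a • x = 0) (c : ℕ) (m : M)
    (hm : ∀ a ∈ geIdeal 𝒜 c, MulOpposite.op a • (Submodule.Quotient.mk m : M ⧸ K) = 0) :
    ∃ n : ℕ, ∀ a ∈ geIdeal 𝒜 n, MulOpposite.op a • m = 0 := by
  induction c generalizing m with
  | zero =>
    refine hK m ((Submodule.Quotient.mk_eq_zero K).1 ?_)
    simpa using hm 1 (one_mem_geIdeal_zero 𝒜)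
  | succ c ih =>
    have hgm : ∀ i, ∃ n : ℕ, ∀ a ∈ geIdeal 𝒜 n,
        MulOpposite.op a • MulOpposite.op (g i) • m = 0 := by
      refine fun i => ih _ fun a ha => ?_
      rw [← Submodule.Quotient.mk_smul, smul_smul, ← MulOpposite.op_mul,
        Submodule.Quotient.mk_smul]
      exact hm _ (add_comm 1 c ▸ mul_mem_geIdeal_s5 𝒜 (hg i) ha)
    choose n hn using hgm
    refine ⟨Finset.univ.sup n + D, fun a ha => op_smul_eq_zero_of_mem_closure ?_ (htail _ ha)⟩
    rintro _ ⟨_, ⟨i, rfl⟩, b, hb, rfl⟩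
    rw [MulOpposite.op_mul, mul_smul]
    exact hn i b (geIdeal_antitone_s5 𝒜 (Finset.le_sup (Finset.mem_univ i)) hb)

end Module

/-- Extension-closedness of the class of modules all of whose elements are
annihilated by some tail `A_{≥ n}` (proof of Proposition 3.4). -/
theorem tail_torsion_closed_under_extensions {A : Type*} [Ring A]
    (𝒜 : ℕ → AddSubgroup A) [GradedRing 𝒜]
    (hfg : IsFGRightIdealSet (geIdeal 𝒜 1))
    (M : Type*) [AddCommGroup M] [Module Aᵐᵒᵖ M] (K : Submodule Aᵐᵒᵖ M)
    (hK : ∀ x ∈ K, ∃ n : ℕ, ∀ a ∈ geIdeal 𝒜 n, MulOpposite.op a • x = 0)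
    (hMK : ∀ y : M ⧸ K, ∃ n : ℕ, ∀ a ∈ geIdeal 𝒜 n, MulOpposite.op a • y = 0) :
    ∀ m : M, ∃ n : ℕ, ∀ a ∈ geIdeal 𝒜 n, MulOpposite.op a • m = 0 := by
  obtain ⟨ι, _, g, d, hg, hg_pos, hspan⟩ := hfg.exists_homogeneous_generators
  obtain ⟨D, htail⟩ := exists_geIdeal_add_subset_closure hg hspan
  intro m
  obtain ⟨c, hc⟩ := hMK (Submodule.Quotient.mk m)
  exact exists_geIdeal_smul_eq_zero_of_mk hg_pos htail K hK c m hc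
end
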